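/- Let P be a complex polynomial of degree n with all zeros in the closed unit disk and m = min_{|z|=1}|P(z)|. For R > r ≥ 1, α, β ∈ ℂ with |α| ≤ 1, |β| ≤ 1, and φ = β(((R+1)/(r+1))^n − |α|) − α, for every |z| ≥ 1: |P(Rz) + φ P(rz)| ≥ |R^n + φ r^n| · |z|^n · m. -/

import Mathlib

open Polynomial Complex

/-!
Let `m` be the minimum of `|P|` on the unit circle. The minimum modulus principle, applied to the
reflected polynomial `v ^ n * P (1 / v)` on the closed unit disk, gives `m * |u| ^ n ≤ |P u|` for
`|u| ≥ 1` and `m ≤ |lead P|`.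

For `|w| ≤ 1 ≤ |z|` one has `(R + 1) |r z - w| ≤ (r + 1) |R z - w|`; multiplying over the zeros,
`(R + 1) ^ n |F (r z)| ≤ (r + 1) ^ n |F (R z)|` for every `F` of degree `n` with its zeros in the
closed disk, so `F (R z) + φ F (r z) ≠ 0` as soon as `|φ| < ((R + 1) / (r + 1)) ^ n`.

If the inequality failed at `z`, then `μ := (P (R z) + φ P (r z)) / (z ^ n (R ^ n + φ r ^ n))`
would satisfy `|μ| < m`, so `F := P - μ X ^ n` would still have degree `n` and its zeros in the
disk, while `F (R z) + φ F (r z) = 0`. The case `|φ| = ((R + 1) / (r + 1)) ^ n` follows by continuity in `φ`,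
and the triangle inequality gives `|φ_n| ≤ ((R + 1) / (r + 1)) ^ n`.
-/

theorem Complex.le_norm_of_forall_mem_frontier_le_norm {E : Type*} [NormedAddCommGroup E]
    [NormedSpace ℂ E] [Nontrivial E] {f : E → ℂ} {U : Set E} (hU : Bornology.IsBounded U)
    (hd : DiffContOnCl ℂ f U) (hf : ∀ z ∈ closure U, f z ≠ 0) {C : ℝ}
    (hC : ∀ z ∈ frontier U, C ≤ ‖f z‖) {z : E} (hz : z ∈ closure U) : C ≤ ‖f z‖ := by
  rcases le_or_gt C 0 with hC0 | hC0
  · exact hC0.trans (norm_nonneg _)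
  have hinv : ‖(f z)⁻¹‖ ≤ C⁻¹ :=
    Complex.norm_le_of_forall_mem_frontier_norm_le (f := fun z => (f z)⁻¹) hU (hd.inv hf)
      (fun w hw => by simpa only [norm_inv] using inv_anti₀ hC0 (hC w hw)) hz
  rw [norm_inv] at hinv
  exact (inv_le_inv₀ (norm_pos_iff.2 (hf z hz)) hC0).1 hinv

theorem eval_reflect_of_ne_zero {K : Type*} [Field K] {P : K[X]} {n : ℕ} (hdeg : P.natDegree ≤ n)
    {v : K} (hv : v ≠ 0) : (P.reflect n).eval v = v ^ n * P.eval v⁻¹ := by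
  let := invertibleOfNonzero (inv_ne_zero hv)
  have := eval₂_reflect_mul_pow (RingHom.id K) v⁻¹ n P hdeg
  rw [invOf_eq_inv, inv_inv] at this
  rw [eval, eval, ← this, inv_pow, mul_comm _ (v ^ n)⁻¹, mul_inv_cancel_left₀ (pow_ne_zero n hv)]

theorem eval_zero_reflect {K : Type*} [Field K] {P : K[X]} {n : ℕ} (hdeg : P.natDegree = n) :
    (P.reflect n).eval 0 = P.leadingCoeff := by
  rw [← coeff_zero_eq_eval_zero, coeff_reflect, revAt_le (Nat.zero_le n), Nat.sub_zero,
    leadingCoeff, hdeg]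

theorem le_norm_eval_reflect {P : ℂ[X]} {n : ℕ} (hdeg : P.natDegree = n)
    (hroots : ∀ w, P.eval w = 0 → ‖w‖ ≤ 1) {m : ℝ} (hm : 0 < m)
    (hmin : ∀ u, ‖u‖ = 1 → m ≤ ‖P.eval u‖) {v : ℂ} (hv : ‖v‖ ≤ 1) :
    m ≤ ‖(P.reflect n).eval v‖ := by
  have hP : ∀ u, 1 ≤ ‖u‖ → P.eval u ≠ 0 := fun u hu h0 => by
    have := hmin u (le_antisymm (hroots u h0) hu)
    rw [h0, norm_zero] at this
    linarith
  have hQ : ∀ x ∈ closure (Metric.ball (0 : ℂ) 1), (P.reflect n).eval x ≠ 0 := by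
    intro x hx
    rw [closure_ball 0 one_ne_zero, mem_closedBall_zero_iff] at hx
    rcases eq_or_ne x 0 with rfl | hx0
    · rw [eval_zero_reflect hdeg, leadingCoeff_ne_zero]
      rintro rfl
      exact hP 1 (by simp) eval_zero
    · rw [eval_reflect_of_ne_zero hdeg.le hx0]
      refine mul_ne_zero (pow_ne_zero n hx0) (hP _ ?_)
      rw [norm_inv]
      exact (one_le_inv₀ (norm_pos_iff.2 hx0)).2 hx
  refine le_norm_of_forall_mem_frontier_le_norm Metric.isBounded_ball
    (P.reflect n).differentiable.diffContOnCl hQ (fun x hx => ?_)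
    (by rwa [closure_ball 0 one_ne_zero, mem_closedBall_zero_iff])
  rw [frontier_ball 0 one_ne_zero, mem_sphere_zero_iff_norm] at hx
  rw [eval_reflect_of_ne_zero hdeg.le (norm_ne_zero_iff.1 (by rw [hx]; exact one_ne_zero)),
    norm_mul, norm_pow, hx, one_pow, one_mul]
  exact hmin _ (by rw [norm_inv, hx, inv_one])

theorem le_norm_leadingCoeff_of_le_norm_eval_reflect {P : ℂ[X]} {n : ℕ} (hdeg : P.natDegree = n)
    {m : ℝ} (hQ : ∀ v, ‖v‖ ≤ 1 → m ≤ ‖(P.reflect n).eval v‖) : m ≤ ‖P.leadingCoeff‖ := by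
  simpa only [eval_zero_reflect hdeg] using hQ 0 (by simp)

theorem mul_pow_le_norm_eval_of_le_norm_eval_reflect {P : ℂ[X]} {n : ℕ}
    (hdeg : P.natDegree = n) {m : ℝ} (hQ : ∀ v, ‖v‖ ≤ 1 → m ≤ ‖(P.reflect n).eval v‖)
    {u : ℂ} (hu : 1 ≤ ‖u‖) : m * ‖u‖ ^ n ≤ ‖P.eval u‖ := by
  have hu0 : u ≠ 0 := norm_ne_zero_iff.1 (by linarith)
  have := hQ u⁻¹ (by rw [norm_inv]; exact inv_le_one_of_one_le₀ hu)
  rwa [eval_reflect_of_ne_zero hdeg.le (inv_ne_zero hu0), inv_inv, norm_mul, norm_pow, norm_inv,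
    inv_pow, le_inv_mul_iff₀ (pow_pos (by linarith) n), mul_comm] at this

theorem add_one_mul_norm_smul_sub_le {E : Type*} [NormedAddCommGroup E] [InnerProductSpace ℝ E]
    {r R : ℝ} (hr : 1 ≤ r) (hrR : r ≤ R) {z w : E} (hwz : ‖w‖ ≤ ‖z‖) :
    (R + 1) * ‖r • z - w‖ ≤ (r + 1) * ‖R • z - w‖ := by
  have norm_smul_sub_sq (t : ℝ) :
      ‖t • z - w‖ ^ 2 = t ^ 2 * ‖z‖ ^ 2 - 2 * t * inner ℝ z w + ‖w‖ ^ 2 := by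
    rw [norm_sub_sq_real, norm_smul, real_inner_smul_left, mul_pow, Real.norm_eq_abs, sq_abs]
    ring
  have key : ((r + 1) * ‖R • z - w‖) ^ 2 - ((R + 1) * ‖r • z - w‖) ^ 2 =
      (R - r) * ((r * R - 1) * ‖z + w‖ ^ 2 + (r + 1) * (R + 1) * (‖z‖ ^ 2 - ‖w‖ ^ 2)) := by
    rw [mul_pow, mul_pow, norm_smul_sub_sq, norm_smul_sub_sq, norm_add_sq_real]
    ring
  have hzw : 0 ≤ ‖z‖ ^ 2 - ‖w‖ ^ 2 := by nlinarith [norm_nonneg w]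
  have hrR' : 0 ≤ r * R - 1 := by nlinarith
  have hkey : 0 ≤ (R - r) * ((r * R - 1) * ‖z + w‖ ^ 2 + (r + 1) * (R + 1) * (‖z‖ ^ 2 - ‖w‖ ^ 2)) :=
    mul_nonneg (by linarith) (add_nonneg (by positivity)
      (mul_nonneg (mul_nonneg (by linarith) (by linarith)) hzw))
  exact (sq_le_sq₀ (mul_nonneg (by linarith) (norm_nonneg _))
    (mul_nonneg (by linarith) (norm_nonneg _))).1 (by linarith)

theorem norm_eval_eq_mul_prod_roots (F : ℂ[X]) (u : ℂ) :
    ‖F.eval u‖ = ‖F.leadingCoeff‖ * (F.roots.map fun a => ‖u - a‖).prod := by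
  rw [(IsAlgClosed.splits F).eval_eq_prod_roots, norm_mul, ← normHom_apply (Multiset.prod _),
    map_multiset_prod, Multiset.map_map]
  rfl

theorem pow_mul_prod_roots_norm_sub {F : ℂ[X]} {n : ℕ} (hdeg : F.natDegree = n) (c : ℝ) (u : ℂ) :
    c ^ n * (F.roots.map fun a => ‖u - a‖).prod = (F.roots.map fun a => c * ‖u - a‖).prod := by
  rw [Multiset.prod_map_mul, Multiset.map_const', Multiset.prod_replicate,
    ← (IsAlgClosed.splits F).natDegree_eq_card_roots, hdeg]

theorem add_one_pow_mul_norm_eval_le {F : ℂ[X]} {n : ℕ} (hdeg : F.natDegree = n)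
    (hroots : ∀ w, F.eval w = 0 → ‖w‖ ≤ 1) {r R : ℝ} (hr : 1 ≤ r) (hrR : r ≤ R) {z : ℂ}
    (hz : 1 ≤ ‖z‖) :
    (R + 1) ^ n * ‖F.eval (r * z)‖ ≤ (r + 1) ^ n * ‖F.eval (R * z)‖ := by
  rw [norm_eval_eq_mul_prod_roots, norm_eval_eq_mul_prod_roots, mul_left_comm,
    pow_mul_prod_roots_norm_sub hdeg, mul_left_comm, pow_mul_prod_roots_norm_sub hdeg]
  refine mul_le_mul_of_nonneg_left (Multiset.prod_map_le_prod_map₀ _ _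
    (fun a _ => mul_nonneg (by linarith) (norm_nonneg _)) fun a ha => ?_) (norm_nonneg _)
  simpa only [← Complex.real_smul] using add_one_mul_norm_smul_sub_le hr hrR
    ((hroots a (isRoot_of_mem_roots ha)).trans hz)

theorem eval_add_mul_eval_ne_zero {F : ℂ[X]} {n : ℕ} (hdeg : F.natDegree = n)
    (hroots : ∀ w, F.eval w = 0 → ‖w‖ ≤ 1) {r R : ℝ} (hr : 1 ≤ r) (hrR : r < R) {z : ℂ}
    (hz : 1 ≤ ‖z‖) {φ : ℂ} (hφ : ‖φ‖ < ((R + 1) / (r + 1)) ^ n) :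
    F.eval (R * z) + φ * F.eval (r * z) ≠ 0 := by
  intro h
  have hRz : F.eval (R * z) = -(φ * F.eval (r * z)) := eq_neg_of_add_eq_zero_left h
  have hrz : F.eval (r * z) ≠ 0 := by
    intro h0
    rw [h0, mul_zero, neg_zero] at hRz
    have := hroots _ hRz
    rw [norm_mul, Complex.norm_real, Real.norm_eq_abs, abs_of_pos (by linarith)] at this
    nlinarith
  rw [div_pow, lt_div_iff₀ (pow_pos (by linarith) n)] at hφ
  have hle := add_one_pow_mul_norm_eval_le hdeg hroots hr hrR.le hz
  rw [hRz, norm_neg, norm_mul, ← mul_assoc, mul_comm _ ‖φ‖] at hle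
  exact (mul_lt_mul_of_pos_right hφ (norm_pos_iff.2 hrz)).not_ge hle

theorem natDegree_sub_C_mul_X_pow {R : Type*} [Ring R] {P : R[X]} {n : ℕ}
    (hdeg : P.natDegree = n) {μ : R} (hμ : μ ≠ P.leadingCoeff) :
    (P - C μ * X ^ n).natDegree = n := by
  refine natDegree_eq_of_le_of_coeff_ne_zero ?_ ?_
  · exact (natDegree_sub_le _ _).trans (max_le hdeg.le (natDegree_C_mul_X_pow_le μ n))
  · rwa [coeff_sub, coeff_C_mul_X_pow, if_pos rfl, ← hdeg, ← leadingCoeff, sub_ne_zero, ne_comm]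

theorem norm_lt_one_of_eval_sub_C_mul_X_pow_eq_zero {P : ℂ[X]} {n : ℕ} {m : ℝ}
    (hgrowth : ∀ u, 1 ≤ ‖u‖ → m * ‖u‖ ^ n ≤ ‖P.eval u‖) {μ : ℂ} (hμ : ‖μ‖ < m) {w : ℂ}
    (hw : (P - C μ * X ^ n).eval w = 0) : ‖w‖ < 1 := by
  by_contra! hw1
  have hPw : P.eval w = μ * w ^ n := by
    simpa only [eval_sub, eval_mul, eval_C, eval_pow, eval_X, sub_eq_zero] using hw
  have := hgrowth w hw1
  rw [hPw, norm_mul, norm_pow] at this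
  exact (mul_lt_mul_of_pos_right hμ (pow_pos (by linarith) n)).not_ge this

theorem mul_norm_le_norm_eval_add_mul_eval_of_lt {P : ℂ[X]} {n : ℕ} (hdeg : P.natDegree = n)
    {m : ℝ} (hlead : m ≤ ‖P.leadingCoeff‖)
    (hgrowth : ∀ u, 1 ≤ ‖u‖ → m * ‖u‖ ^ n ≤ ‖P.eval u‖) {r R : ℝ} (hr : 1 ≤ r) (hrR : r < R)
    {φ : ℂ} (hφ : ‖φ‖ < ((R + 1) / (r + 1)) ^ n) {z : ℂ} (hz : 1 ≤ ‖z‖) :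
    ‖(R : ℂ) ^ n + φ * (r : ℂ) ^ n‖ * ‖z‖ ^ n * m ≤
      ‖P.eval (R * z) + φ * P.eval (r * z)‖ := by
  by_contra! hlt
  set T := P.eval (R * z) + φ * P.eval (r * z)
  set D := (R : ℂ) ^ n + φ * (r : ℂ) ^ n
  have hpos : 0 < ‖D‖ * ‖z‖ ^ n * m := (norm_nonneg T).trans_lt hlt
  have hzD : 0 < ‖z ^ n * D‖ := by
    rw [norm_mul, norm_pow, mul_comm]
    exact pos_of_mul_pos_left hpos (pos_of_mul_pos_right hpos (by positivity)).le
  set μ := T / (z ^ n * D)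
  have hμ : ‖μ‖ < m := by
    rwa [norm_div, div_lt_iff₀ hzD, norm_mul, norm_pow, mul_comm, mul_comm (‖z‖ ^ n)]
  have hF := natDegree_sub_C_mul_X_pow hdeg (μ := μ) fun h => by
    rw [← h] at hlead; linarith
  refine eval_add_mul_eval_ne_zero hF
    (fun w hw => (norm_lt_one_of_eval_sub_C_mul_X_pow_eq_zero hgrowth hμ hw).le) hr hrR hz hφ ?_
  have hμT : μ * (z ^ n * D) = T := div_mul_cancel₀ T (norm_pos_iff.1 hzD)
  simp only [eval_sub, eval_mul, eval_C, eval_pow, eval_X]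
  linear_combination -hμT

theorem mul_norm_le_norm_eval_add_mul_eval {P : ℂ[X]} {n : ℕ} (hdeg : P.natDegree = n)
    {m : ℝ} (hlead : m ≤ ‖P.leadingCoeff‖)
    (hgrowth : ∀ u, 1 ≤ ‖u‖ → m * ‖u‖ ^ n ≤ ‖P.eval u‖) {r R : ℝ} (hr : 1 ≤ r) (hrR : r < R)
    {φ : ℂ} (hφ : ‖φ‖ ≤ ((R + 1) / (r + 1)) ^ n) {z : ℂ} (hz : 1 ≤ ‖z‖) :
    ‖(R : ℂ) ^ n + φ * (r : ℂ) ^ n‖ * ‖z‖ ^ n * m ≤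
      ‖P.eval (R * z) + φ * P.eval (r * z)‖ := by
  have hK : 0 < ((R + 1) / (r + 1)) ^ n := pow_pos (div_pos (by linarith) (by linarith)) n
  have hclosed : IsClosed {φ : ℂ | ‖(R : ℂ) ^ n + φ * (r : ℂ) ^ n‖ * ‖z‖ ^ n * m ≤
      ‖P.eval (R * z) + φ * P.eval (r * z)‖} :=
    isClosed_le (by fun_prop) (by fun_prop)
  have hball := hclosed.closure_subset_iff.2 fun φ hφ =>
    mul_norm_le_norm_eval_add_mul_eval_of_lt hdeg hlead hgrowth hr hrR
      (mem_ball_zero_iff.1 hφ) hz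
  rw [closure_ball 0 hK.ne'] at hball
  exact hball (mem_closedBall_zero_iff.2 hφ)

theorem norm_mul_sub_sub_le {α β : ℂ} {K : ℝ} (hα : ‖α‖ ≤ K) (hβ : ‖β‖ ≤ 1) :
    ‖β * ((K : ℂ) - ‖α‖) - α‖ ≤ K :=
  calc ‖β * ((K : ℂ) - ‖α‖) - α‖ ≤ ‖β‖ * (K - ‖α‖) + ‖α‖ := by
        refine (norm_sub_le _ _).trans_eq ?_
        rw [norm_mul, ← Complex.ofReal_sub, Complex.norm_real,
          Real.norm_of_nonneg (sub_nonneg.2 hα)]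
    _ ≤ 1 * (K - ‖α‖) + ‖α‖ := by gcongr
    _ = K := by ring

theorem stmt_16 (P : Polynomial ℂ) (n : ℕ) (hdeg : P.natDegree = n)
    (hroots : ∀ w : ℂ, P.eval w = 0 → ‖w‖ ≤ 1)
    (m : ℝ)
    (hm : IsLeast ((fun z : ℂ => ‖P.eval z‖) '' {z : ℂ | ‖z‖ = 1}) m)
    (R r : ℝ) (hr : 1 ≤ r) (hRr : r < R)
    (α β : ℂ) (hα : ‖α‖ ≤ 1) (hβ : ‖β‖ ≤ 1)
    (φ : ℂ) (hφ : φ = β * ((((R + 1) / (r + 1)) ^ n : ℝ) - ‖α‖) - α) :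
    ∀ z : ℂ, 1 ≤ ‖z‖ →
      ‖(R : ℂ) ^ n + φ * (r : ℂ) ^ n‖ * ‖z‖ ^ n * m ≤
        ‖P.eval ((R : ℂ) * z) + φ * P.eval ((r : ℂ) * z)‖ := by
  intro z hz
  obtain ⟨⟨z₀, -, hz₀⟩, hmin⟩ := hm
  rcases (hz₀ ▸ norm_nonneg _ : 0 ≤ m).eq_or_lt with rfl | hm
  · rw [mul_zero]
    exact norm_nonneg _
  have hQ : ∀ v, ‖v‖ ≤ 1 → m ≤ ‖(P.reflect n).eval v‖ := fun v hv =>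
    le_norm_eval_reflect hdeg hroots hm (fun u hu => hmin ⟨u, hu, rfl⟩) hv
  have hK : 1 ≤ ((R + 1) / (r + 1)) ^ n :=
    one_le_pow₀ ((one_le_div (by linarith)).2 (by linarith))
  exact mul_norm_le_norm_eval_add_mul_eval hdeg
    (le_norm_leadingCoeff_of_le_norm_eval_reflect hdeg hQ)
    (fun u hu => mul_pow_le_norm_eval_of_le_norm_eval_reflect hdeg hQ hu) hr hRr
    (hφ ▸ norm_mul_sub_sub_le (hα.trans hK) hβ) hz
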